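/- Let m ≥ 2 be an integer, let u : ℝ^m ∖ {0} → ℝ^{m²} be the Misawa–Nakauchi map, and for α ∈ (0, π/2) define ũ_α : ℝ^m ∖ {0} → ℝ^{m²+1} by ũ_α(x) = (sin α · u(x), cos α), a map into the unit sphere 𝕊^{m²} ⊂ ℝ^{m²+1}. Then ũ_α satisfies the biharmonic map equation Δ²ũ_α + 2 div(|∇ũ_α|² ∇ũ_α) + (|Δũ_α|² + Δ|∇ũ_α|² + 2⟨∇ũ_α, ∇Δũ_α⟩ + 2|∇ũ_α|⁴) ũ_α = 0 at every point of ℝ^m ∖ {0} if and only if sin²α = 1 − 2/m. -/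

import Mathlib

noncomputable section

open Real

/-- Partial derivative of `f` in the `k`-th coordinate direction. -/
def pd {m : ℕ} (k : Fin m) (f : EuclideanSpace ℝ (Fin m) → ℝ)
    (x : EuclideanSpace ℝ (Fin m)) : ℝ :=
  fderiv ℝ f x (EuclideanSpace.single k 1)

/-- Euclidean Laplacian `Δf = Σ_k ∂²f/∂x_k²`. -/
def lap {m : ℕ} (f : EuclideanSpace ℝ (Fin m) → ℝ)
    (x : EuclideanSpace ℝ (Fin m)) : ℝ :=
  ∑ k : Fin m, pd k (pd k f) x

/-- Squared norm of the total derivative of a map `w` with components `w a`: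
`|∇w|² = Σ_{k,a} (∂_k w_a)²`. -/
def gradSq {m : ℕ} {ι : Type*} [Fintype ι]
    (w : ι → EuclideanSpace ℝ (Fin m) → ℝ) (x : EuclideanSpace ℝ (Fin m)) : ℝ :=
  ∑ k : Fin m, ∑ a : ι, (pd k (w a) x) ^ 2

/-- `w` satisfies the (extrinsic) biharmonic map equation for sphere-valued maps at `x`:
`Δ²w + 2 div(|∇w|²∇w) + (|Δw|² + Δ|∇w|² + 2⟨∇w,∇Δw⟩ + 2|∇w|⁴) w = 0`. -/
def IsBiharmonicAt {m : ℕ} {ι : Type*} [Fintype ι]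
    (w : ι → EuclideanSpace ℝ (Fin m) → ℝ) (x : EuclideanSpace ℝ (Fin m)) : Prop :=
  ∀ a : ι,
    lap (lap (w a)) x
      + 2 * ∑ k : Fin m, pd k (fun y => gradSq w y * pd k (w a) y) x
      + ((∑ b : ι, (lap (w b) x) ^ 2) + lap (gradSq w) x
          + 2 * ∑ k : Fin m, ∑ b : ι, pd k (w b) x * pd k (lap (w b)) x
          + 2 * (gradSq w x) ^ 2) * w a x = 0

/-- The Misawa–Nakauchi map `u_{ij}(x) = (1/√(m(m−1)))(−δ_{ij} + m xᵢxⱼ/r²)`. -/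
def uMN (m : ℕ) (i j : Fin m) (x : EuclideanSpace ℝ (Fin m)) : ℝ :=
  (1 / Real.sqrt ((m : ℝ) * ((m : ℝ) - 1))) *
    (-(if i = j then (1 : ℝ) else 0) + (m : ℝ) * x i * x j / ‖x‖ ^ 2)

/-- The rotated map `ũ_α = (sin α · u, cos α)`, with values in `ℝ^{m²+1} = ℝ^{m²} × ℝ`. -/
def uTilde (m : ℕ) (α : ℝ) :
    (Fin m × Fin m) ⊕ Unit → EuclideanSpace ℝ (Fin m) → ℝ
  | Sum.inl p => fun x => Real.sin α * uMN m p.1 p.2 x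
  | Sum.inr _ => fun _ => Real.cos α

/-! The Misawa–Nakauchi map `u` is a harmonic map into the sphere, `Δu = -|∇u|² u`, with energy
density `|∇u|² = 2m/r²`; since `u` is homogeneous of degree `0` and `∇|∇u|²` is radial, Euler's
identity gives `∇|∇u|² · ∇u = 0`. For every harmonic sphere map with this property, each component
of the biharmonic tension of `ũ_α = (sin α · u, cos α)` is a multiple of
`Δ|∇u|² - (1 - 2 sin²α) |∇u|⁴`, the last one being `sin²α cos α` times it. As
`Δ(r⁻²) = (8 - 2m) r⁻⁴`, this factor vanishes iff `2m(8 - 2m) = 4m²(1 - 2 sin²α)`, i.e.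
`sin²α = 1 - 2/m`. -/

open Set
open scoped ContDiff

section PartialDerivatives

variable {m : ℕ} {U : Set (EuclideanSpace ℝ (Fin m))} {f g : EuclideanSpace ℝ (Fin m) → ℝ}
  {x : EuclideanSpace ℝ (Fin m)} {k : Fin m}

lemma pd_congr_of_eqOn (hU : IsOpen U) (hx : x ∈ U) (h : EqOn f g U) : pd k f x = pd k g x := by
  unfold pd
  rw [(Filter.eventuallyEq_of_mem (hU.mem_nhds hx) h).fderiv_eq]

lemma lap_congr_of_eqOn (hU : IsOpen U) (hx : x ∈ U) (h : EqOn f g U) : lap f x = lap g x :=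
  Finset.sum_congr rfl fun _ _ => pd_congr_of_eqOn hU hx fun _ hy => pd_congr_of_eqOn hU hy h

lemma pd_const (c : ℝ) : pd k (fun _ => c) x = 0 := by
  simp [pd]

lemma pd_const_mul (c : ℝ) : pd k (fun y => c * f y) x = c * pd k f x := by
  simp [pd, ← smul_eq_mul, ← Pi.smul_def, fderiv_const_smul_field]

lemma pd_const_add (c : ℝ) : pd k (fun y => c + f y) x = pd k f x := by
  simp [pd, fderiv_const_add]

lemma pd_neg : pd k (fun y => -f y) x = -pd k f x := by
  simp [pd, fderiv_fun_neg]

lemma pd_add (hf : DifferentiableAt ℝ f x) (hg : DifferentiableAt ℝ g x) :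
    pd k (fun y => f y + g y) x = pd k f x + pd k g x := by
  simp [pd, fderiv_fun_add hf hg]

lemma pd_mul (hf : DifferentiableAt ℝ f x) (hg : DifferentiableAt ℝ g x) :
    pd k (fun y => f y * g y) x = f x * pd k g x + g x * pd k f x := by
  simp [pd, fderiv_fun_mul hf hg]

lemma pd_sum {ι : Type*} (s : Finset ι) {F : ι → EuclideanSpace ℝ (Fin m) → ℝ}
    (h : ∀ a ∈ s, DifferentiableAt ℝ (F a) x) :
    pd k (fun y => ∑ a ∈ s, F a y) x = ∑ a ∈ s, pd k (F a) x := by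
  simp [pd, fderiv_fun_sum h]

lemma differentiableAt_coord (i : Fin m) : DifferentiableAt ℝ (fun y => y i) x :=
  (EuclideanSpace.proj (𝕜 := ℝ) i).differentiableAt

lemma pd_coord (i : Fin m) : pd k (fun y => y i) x = if i = k then 1 else 0 := by
  rw [pd, show (fun y : EuclideanSpace ℝ (Fin m) => y i) = EuclideanSpace.proj i from rfl,
    ContinuousLinearMap.fderiv]
  simp [PiLp.single_apply]

lemma pd_inv (hf : DifferentiableAt ℝ f x) (hx : f x ≠ 0) :
    pd k (fun y => (f y)⁻¹) x = -pd k f x / f x ^ 2 := by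
  have h := (hasDerivAt_inv hx).comp_hasFDerivAt x hf.hasFDerivAt
  rw [Function.comp_def] at h
  simp only [pd, h.fderiv, FunLike.coe_smul, Pi.smul_apply, smul_eq_mul]
  ring

lemma pd_norm_sq : pd k (fun y => ‖y‖ ^ 2) x = 2 * x k := by
  simp [pd, EuclideanSpace.inner_single_right]

lemma ContDiffOn.pd (hU : IsOpen U) (hf : ContDiffOn ℝ ∞ f U) : ContDiffOn ℝ ∞ (pd k f) U :=
  (hf.fderiv_of_isOpen hU (by simp)).clm_apply contDiffOn_const

lemma contDiffOn_coord (i : Fin m) :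
    ContDiffOn ℝ ∞ (fun y : EuclideanSpace ℝ (Fin m) => y i) U :=
  (EuclideanSpace.proj (𝕜 := ℝ) i).contDiff.contDiffOn

lemma ContDiffOn.differentiableAt_of_isOpen (hU : IsOpen U) (hf : ContDiffOn ℝ ∞ f U)
    (hx : x ∈ U) : DifferentiableAt ℝ f x :=
  (hf.contDiffAt (hU.mem_nhds hx)).differentiableAt (by simp)

lemma sum_mul_pd_eq_zero_of_smul_eq {f : EuclideanSpace ℝ (Fin m) → ℝ}
    (hf : DifferentiableAt ℝ f x) (h : ∀ t : ℝ, 0 < t → f (t • x) = f x) :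
    ∑ k, x k * pd k f x = 0 := by
  have hx : ∑ k, x k • EuclideanSpace.single k (1 : ℝ) = x := by
    simpa using (EuclideanSpace.basisFun (Fin m) ℝ).sum_repr x
  have hsum : ∑ k, x k * pd k f x = fderiv ℝ f x x :=
    calc ∑ k, x k * pd k f x
        = fderiv ℝ f x (∑ k, x k • EuclideanSpace.single k (1 : ℝ)) := by simp [pd]
      _ = fderiv ℝ f x x := by rw [hx]
  have hderiv : HasDerivAt (fun t : ℝ => f (t • x)) (fderiv ℝ f x x) 1 := by
    have := hf.hasFDerivAt.comp_hasDerivAt_of_eq 1 ((hasDerivAt_id (1 : ℝ)).smul_const x)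
      (one_smul ℝ x).symm
    simpa [Function.comp_def] using this
  have hconst : (fun t : ℝ => f (t • x)) =ᶠ[nhds 1] fun _ => f x :=
    Filter.eventually_of_mem (Ioi_mem_nhds one_pos) h
  rw [hsum, hderiv.unique ((hasDerivAt_const (1 : ℝ) (f x)).congr_of_eventuallyEq hconst)]

end PartialDerivatives

section Laplacian

variable {m : ℕ} {U : Set (EuclideanSpace ℝ (Fin m))} {f g : EuclideanSpace ℝ (Fin m) → ℝ}
  {x : EuclideanSpace ℝ (Fin m)}

lemma lap_const (c : ℝ) : lap (fun _ => c) x = 0 := by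
  have h k : pd k (fun _ : EuclideanSpace ℝ (Fin m) => c) = fun _ => 0 :=
    funext fun _ => pd_const c
  simp only [lap, h, pd_const, Finset.sum_const_zero]

lemma lap_const_mul (c : ℝ) : lap (fun y => c * f y) x = c * lap f x := by
  have h k : pd k (fun y => c * f y) = fun y => c * pd k f y := funext fun _ => pd_const_mul c
  simp only [lap, h, pd_const_mul, Finset.mul_sum]

lemma lap_const_add (c : ℝ) : lap (fun y => c + f y) x = lap f x := by
  have h k : pd k (fun y => c + f y) = pd k f := funext fun _ => pd_const_add c
  simp only [lap, h]

lemma lap_neg : lap (fun y => -f y) x = -lap f x := by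
  have h k : pd k (fun y => -f y) = fun y => -pd k f y := funext fun _ => pd_neg
  simp only [lap, h, pd_neg, Finset.sum_neg_distrib]

variable (hU : IsOpen U) (hx : x ∈ U)
include hU hx

lemma sum_pd_mul_pd (hf : ContDiffOn ℝ ∞ f U) (hg : ContDiffOn ℝ ∞ g U) :
    ∑ k, pd k (fun y => f y * pd k g y) x = f x * lap g x + ∑ k, pd k f x * pd k g x := by
  simp only [pd_mul (hf.differentiableAt_of_isOpen hU hx)
    ((hg.pd hU).differentiableAt_of_isOpen hU hx), Finset.sum_add_distrib, lap, Finset.mul_sum,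
    mul_comm (pd _ g x)]

lemma lap_mul (hf : ContDiffOn ℝ ∞ f U) (hg : ContDiffOn ℝ ∞ g U) :
    lap (fun y => f y * g y) x
      = f x * lap g x + 2 * ∑ k, pd k f x * pd k g x + g x * lap f x := by
  have hpd k : EqOn (pd k fun y => f y * g y) (fun y => f y * pd k g y + g y * pd k f y) U :=
    fun y hy =>
      pd_mul (hf.differentiableAt_of_isOpen hU hy) (hg.differentiableAt_of_isOpen hU hy)
  have hdiff {φ ψ : EuclideanSpace ℝ (Fin m) → ℝ} (hφ : ContDiffOn ℝ ∞ φ U)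
      (hψ : ContDiffOn ℝ ∞ ψ U) (k : Fin m) :
      DifferentiableAt ℝ (fun y => φ y * pd k ψ y) x :=
    (hφ.mul (hψ.pd hU)).differentiableAt_of_isOpen hU hx
  simp only [lap, pd_congr_of_eqOn hU hx (hpd _), pd_add (hdiff hf hg _) (hdiff hg hf _),
    Finset.sum_add_distrib]
  rw [sum_pd_mul_pd hU hx hf hg, sum_pd_mul_pd hU hx hg hf, lap, lap]
  simp only [mul_comm (pd _ g x)]
  ring

lemma lap_sum {ι : Type*} (s : Finset ι) {F : ι → EuclideanSpace ℝ (Fin m) → ℝ}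
    (hF : ∀ a ∈ s, ContDiffOn ℝ ∞ (F a) U) :
    lap (fun y => ∑ a ∈ s, F a y) x = ∑ a ∈ s, lap (F a) x := by
  have hpd k : EqOn (pd k fun y => ∑ a ∈ s, F a y) (fun y => ∑ a ∈ s, pd k (F a) y) U :=
    fun y hy => pd_sum s fun a ha => (hF a ha).differentiableAt_of_isOpen hU hy
  simp only [lap, pd_congr_of_eqOn hU hx (hpd _),
    pd_sum s fun a ha => ((hF a ha).pd hU).differentiableAt_of_isOpen hU hx]
  exact Finset.sum_comm

lemma lap_coord_mul (i : Fin m) (hf : ContDiffOn ℝ ∞ f U) :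
    lap (fun y => y i * f y) x = x i * lap f x + 2 * pd i f x := by
  have hpd k :
      pd k (fun y : EuclideanSpace ℝ (Fin m) => y i) = fun _ => if i = k then 1 else 0 :=
    funext fun _ => pd_coord i
  have hlap : lap (fun y : EuclideanSpace ℝ (Fin m) => y i) x = 0 := by
    simp only [lap, hpd, pd_const, Finset.sum_const_zero]
  simp [lap_mul hU hx (contDiffOn_coord i) hf, hlap, pd_coord]

end Laplacian

section SphereMaps

variable {m : ℕ} {ι : Type*} [Fintype ι] {U : Set (EuclideanSpace ℝ (Fin m))}
  {u : ι → EuclideanSpace ℝ (Fin m) → ℝ} {x : EuclideanSpace ℝ (Fin m)}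

lemma ContDiffOn.gradSq (hU : IsOpen U) (hu : ∀ a, ContDiffOn ℝ ∞ (u a) U) :
    ContDiffOn ℝ ∞ (gradSq u) U :=
  ContDiffOn.sum fun _ _ => ContDiffOn.sum fun a _ => ((hu a).pd hU).pow 2

/-- Apply `Δ` to `Σ_a u_a² = 1`: `0 = 2 Σ_a u_a Δu_a + 2 |∇u|² = -2e + 2 |∇u|²`. -/
lemma gradSq_eq_of_lap_eq (hU : IsOpen U) (hx : x ∈ U) (hu : ∀ a, ContDiffOn ℝ ∞ (u a) U)
    (hsphere : ∀ y ∈ U, ∑ a, u a y ^ 2 = 1) {e : EuclideanSpace ℝ (Fin m) → ℝ}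
    (hlap : ∀ a, lap (u a) x = -(e x * u a x)) : gradSq u x = e x := by
  have h0 : lap (fun y => ∑ a, u a y * u a y) x = 0 := by
    rw [lap_congr_of_eqOn hU hx (g := fun _ => 1) fun y hy => by simpa [sq] using hsphere y hy,
      lap_const]
  rw [lap_sum hU hx _ fun a _ => (hu a).mul (hu a)] at h0
  simp only [lap_mul hU hx (hu _) (hu _), hlap] at h0
  have hsum : ∑ a, u a x * u a x = 1 := by simpa [sq] using hsphere x hx
  rw [gradSq, Finset.sum_comm]
  simp only [mul_neg, mul_left_comm (u _ x) (e x), Finset.sum_add_distrib, Finset.sum_neg_distrib,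
    ← Finset.mul_sum, hsum, sq] at h0 ⊢
  linarith

structure IsHarmonicSphereMapOn (U : Set (EuclideanSpace ℝ (Fin m)))
    (u : ι → EuclideanSpace ℝ (Fin m) → ℝ) : Prop where
  contDiffOn : ∀ a, ContDiffOn ℝ ∞ (u a) U
  sum_sq : ∀ y ∈ U, ∑ a, u a y ^ 2 = 1
  lap_eq : ∀ y ∈ U, ∀ a, lap (u a) y = -(gradSq u y * u a y)

lemma IsHarmonicSphereMapOn.of_lap_eq (hU : IsOpen U) (hu : ∀ a, ContDiffOn ℝ ∞ (u a) U)
    (hsphere : ∀ y ∈ U, ∑ a, u a y ^ 2 = 1) {e : EuclideanSpace ℝ (Fin m) → ℝ}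
    (hlap : ∀ y ∈ U, ∀ a, lap (u a) y = -(e y * u a y)) : IsHarmonicSphereMapOn U u where
  contDiffOn := hu
  sum_sq := hsphere
  lap_eq y hy a := by rw [gradSq_eq_of_lap_eq hU hy hu hsphere (hlap y hy), hlap y hy]

namespace IsHarmonicSphereMapOn

variable (hu : IsHarmonicSphereMapOn U u) (hU : IsOpen U) (hx : x ∈ U)
include hu hU hx

lemma sum_mul_pd_eq_zero (k : Fin m) : ∑ a, u a x * pd k (u a) x = 0 := by
  have hd a : DifferentiableAt ℝ (u a) x := (hu.contDiffOn a).differentiableAt_of_isOpen hU hx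
  have h0 : pd k (fun y => ∑ a, u a y * u a y) x = 0 := by
    rw [pd_congr_of_eqOn hU hx (g := fun _ => 1) fun y hy => by simpa [sq] using hu.sum_sq y hy,
      pd_const]
  rw [pd_sum _ fun a _ => (hd a).fun_mul (hd a)] at h0
  simp only [pd_mul (hd _) (hd _), Finset.sum_add_distrib] at h0
  linarith

lemma lap_lap (a : ι) (horth : ∑ k, pd k (gradSq u) x * pd k (u a) x = 0) :
    lap (lap (u a)) x = (gradSq u x ^ 2 - lap (gradSq u) x) * u a x := by
  rw [lap_congr_of_eqOn hU hx fun y hy => hu.lap_eq y hy a, lap_neg,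
    lap_mul hU hx (ContDiffOn.gradSq hU hu.contDiffOn) (hu.contDiffOn a), horth, hu.lap_eq x hx a]
  ring

lemma sum_pd_gradSq_mul_pd (a : ι) (horth : ∑ k, pd k (gradSq u) x * pd k (u a) x = 0) :
    ∑ k, pd k (fun y => gradSq u y * pd k (u a) y) x = -(gradSq u x ^ 2 * u a x) := by
  rw [sum_pd_mul_pd hU hx (ContDiffOn.gradSq hU hu.contDiffOn) (hu.contDiffOn a), horth,
    hu.lap_eq x hx a]
  ring

lemma sum_sum_pd_mul_pd_lap :
    ∑ k, ∑ b, pd k (u b) x * pd k (lap (u b)) x = -(gradSq u x ^ 2) := by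
  have h k b : pd k (u b) x * pd k (lap (u b)) x
      = -(gradSq u x * pd k (u b) x ^ 2 + pd k (gradSq u) x * (u b x * pd k (u b) x)) := by
    rw [pd_congr_of_eqOn hU hx fun y hy => hu.lap_eq y hy b, pd_neg,
      pd_mul ((ContDiffOn.gradSq hU hu.contDiffOn).differentiableAt_of_isOpen hU hx)
        ((hu.contDiffOn b).differentiableAt_of_isOpen hU hx)]
    ring
  simp only [h, Finset.sum_neg_distrib, Finset.sum_add_distrib, ← Finset.mul_sum,
    hu.sum_mul_pd_eq_zero hU hx, mul_zero, add_zero]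
  rw [gradSq, sq]

end IsHarmonicSphereMapOn

end SphereMaps

section RotatedMap

variable {m : ℕ} {ι : Type*}

def rotatedMap {X : Type*} (α : ℝ) (u : ι → X → ℝ) : ι ⊕ Unit → X → ℝ
  | .inl a => fun x => sin α * u a x
  | .inr _ => fun _ => cos α

variable {U : Set (EuclideanSpace ℝ (Fin m))} {u : ι → EuclideanSpace ℝ (Fin m) → ℝ}
  {x : EuclideanSpace ℝ (Fin m)} {k : Fin m} {α : ℝ}

lemma pd_rotatedMap_inl (a : ι) : pd k (rotatedMap α u (.inl a)) x = sin α * pd k (u a) x :=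
  pd_const_mul _

lemma pd_rotatedMap_inr (b : Unit) : pd k (rotatedMap α u (.inr b)) x = 0 :=
  pd_const _

lemma lap_rotatedMap_inl (a : ι) :
    lap (rotatedMap α u (.inl a)) = fun y => sin α * lap (u a) y :=
  funext fun _ => lap_const_mul _

lemma lap_rotatedMap_inr (b : Unit) : lap (rotatedMap α u (.inr b)) = fun _ => 0 :=
  funext fun _ => lap_const _

variable [Fintype ι]

def biharmonicCoeff (w : ι → EuclideanSpace ℝ (Fin m) → ℝ) (x : EuclideanSpace ℝ (Fin m)) :
    ℝ :=
  (∑ b, (lap (w b) x) ^ 2) + lap (gradSq w) x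
    + 2 * ∑ k : Fin m, ∑ b, pd k (w b) x * pd k (lap (w b)) x + 2 * (gradSq w x) ^ 2

def biharmonicTension (w : ι → EuclideanSpace ℝ (Fin m) → ℝ) (x : EuclideanSpace ℝ (Fin m))
    (a : ι) : ℝ :=
  lap (lap (w a)) x + 2 * ∑ k : Fin m, pd k (fun y => gradSq w y * pd k (w a) y) x
    + biharmonicCoeff w x * w a x

lemma isBiharmonicAt_iff_biharmonicTension_eq_zero {w : ι → EuclideanSpace ℝ (Fin m) → ℝ}
    {x : EuclideanSpace ℝ (Fin m)} : IsBiharmonicAt w x ↔ ∀ a, biharmonicTension w x a = 0 :=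
  Iff.rfl

lemma gradSq_rotatedMap : gradSq (rotatedMap α u) = fun y => sin α ^ 2 * gradSq u y := by
  funext y
  simp [gradSq, Fintype.sum_sum_type, pd_rotatedMap_inl, pd_rotatedMap_inr, mul_pow,
    Finset.mul_sum]

namespace IsHarmonicSphereMapOn

variable (hu : IsHarmonicSphereMapOn U u) (hU : IsOpen U) (hx : x ∈ U)
include hu hU hx

lemma biharmonicCoeff_rotatedMap :
    biharmonicCoeff (rotatedMap α u) x
      = sin α ^ 2 * (lap (gradSq u) x - gradSq u x ^ 2 + 2 * sin α ^ 2 * gradSq u x ^ 2) := by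
  have hlap : ∑ b, lap (rotatedMap α u b) x ^ 2 = sin α ^ 2 * gradSq u x ^ 2 := by
    simp [Fintype.sum_sum_type, lap_rotatedMap_inl, lap_rotatedMap_inr, hu.lap_eq x hx, mul_pow,
      ← Finset.mul_sum, hu.sum_sq x hx]
  have hcross : ∑ k, ∑ b, pd k (rotatedMap α u b) x * pd k (lap (rotatedMap α u b)) x
      = -(sin α ^ 2 * gradSq u x ^ 2) := by
    simp only [Fintype.sum_sum_type, lap_rotatedMap_inl, lap_rotatedMap_inr, pd_const_mul,
      pd_rotatedMap_inl, pd_rotatedMap_inr, zero_mul, Finset.sum_const_zero, add_zero]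
    rw [show -(sin α ^ 2 * gradSq u x ^ 2) = sin α ^ 2 * -(gradSq u x ^ 2) by ring,
      ← hu.sum_sum_pd_mul_pd_lap hU hx]
    simp only [Finset.mul_sum]
    exact Finset.sum_congr rfl fun _ _ => Finset.sum_congr rfl fun _ _ => by ring
  rw [biharmonicCoeff, hlap, gradSq_rotatedMap, lap_const_mul, hcross]
  ring

lemma biharmonicTension_rotatedMap_inl (a : ι)
    (horth : ∑ k, pd k (gradSq u) x * pd k (u a) x = 0) :
    biharmonicTension (rotatedMap α u) x (.inl a)
      = -(sin α * cos α ^ 2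
          * (lap (gradSq u) x - gradSq u x ^ 2 + 2 * sin α ^ 2 * gradSq u x ^ 2) * u a x) := by
  have hdiv k : (fun y => gradSq (rotatedMap α u) y * pd k (rotatedMap α u (.inl a)) y)
      = fun y => sin α ^ 3 * (gradSq u y * pd k (u a) y) := by
    funext y
    rw [gradSq_rotatedMap, pd_rotatedMap_inl]
    ring
  rw [biharmonicTension, hu.biharmonicCoeff_rotatedMap hU hx, lap_rotatedMap_inl, lap_const_mul,
    hu.lap_lap hU hx a horth]
  simp only [hdiv, pd_const_mul, ← Finset.mul_sum, hu.sum_pd_gradSq_mul_pd hU hx a horth]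
  change _ + _ + _ * (sin α * u a x) = _
  linear_combination sin α * u a x
    * (lap (gradSq u) x - gradSq u x ^ 2 + 2 * sin α ^ 2 * gradSq u x ^ 2) * sin_sq_add_cos_sq α

lemma biharmonicTension_rotatedMap_inr (b : Unit) :
    biharmonicTension (rotatedMap α u) x (.inr b)
      = sin α ^ 2 * cos α
          * (lap (gradSq u) x - gradSq u x ^ 2 + 2 * sin α ^ 2 * gradSq u x ^ 2) := by
  rw [biharmonicTension, hu.biharmonicCoeff_rotatedMap hU hx, lap_rotatedMap_inr, lap_const]
  simp only [pd_const, Finset.sum_const_zero, mul_zero, zero_add, rotatedMap]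
  ring

theorem isBiharmonicAt_rotatedMap_iff (hsin : sin α ≠ 0) (hcos : cos α ≠ 0)
    (horth : ∀ a, ∑ k, pd k (gradSq u) x * pd k (u a) x = 0) :
    IsBiharmonicAt (rotatedMap α u) x
      ↔ lap (gradSq u) x = (1 - 2 * sin α ^ 2) * gradSq u x ^ 2 := by
  rw [isBiharmonicAt_iff_biharmonicTension_eq_zero]
  constructor
  · intro h
    have hinr := h (.inr ())
    rw [hu.biharmonicTension_rotatedMap_inr hU hx] at hinr
    have := (mul_eq_zero.mp hinr).resolve_left (by positivity)
    linarith
  · intro h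
    have hK : lap (gradSq u) x - gradSq u x ^ 2 + 2 * sin α ^ 2 * gradSq u x ^ 2 = 0 := by
      linarith
    rintro (a | b)
    · rw [hu.biharmonicTension_rotatedMap_inl hU hx a (horth a), hK]
      ring
    · rw [hu.biharmonicTension_rotatedMap_inr hU hx b, hK, mul_zero]

end IsHarmonicSphereMapOn

end RotatedMap

section MisawaNakauchi

variable {m : ℕ} {x : EuclideanSpace ℝ (Fin m)} {k : Fin m}

def invNormSq (y : EuclideanSpace ℝ (Fin m)) : ℝ := (‖y‖ ^ 2)⁻¹

lemma contDiffOn_invNormSq : ContDiffOn ℝ ∞ (invNormSq (m := m)) {0}ᶜ :=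
  (contDiff_norm_sq ℝ).contDiffOn.inv fun y hy => by simpa using hy

lemma sum_sq_mul_invNormSq (hx : x ≠ 0) : (∑ i, x i ^ 2) * invNormSq x = 1 := by
  rw [← EuclideanSpace.real_norm_sq_eq, invNormSq, mul_inv_cancel₀ (by positivity)]

lemma pd_invNormSq (hx : x ≠ 0) : pd k invNormSq x = -2 * x k * invNormSq x ^ 2 := by
  change pd k (fun y => (‖y‖ ^ 2)⁻¹) x = -2 * x k * ((‖x‖ ^ 2)⁻¹) ^ 2
  rw [pd_inv (hasStrictFDerivAt_norm_sq x).differentiableAt (by positivity), pd_norm_sq]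
  ring

lemma differentiableAt_invNormSq (hx : x ≠ 0) : DifferentiableAt ℝ invNormSq x :=
  contDiffOn_invNormSq.differentiableAt_of_isOpen isOpen_compl_singleton hx

lemma lap_invNormSq (hx : x ≠ 0) : lap invNormSq x = (8 - 2 * m) * invNormSq x ^ 2 := by
  have hpd (k : Fin m) :
      EqOn (pd k invNormSq) (fun y => -2 * (y k * (invNormSq y * invNormSq y))) {0}ᶜ :=
    fun y hy => by rw [pd_invNormSq hy]; ring
  have hq := differentiableAt_invNormSq hx
  rw [lap, Finset.sum_congr rfl fun k _ => pd_congr_of_eqOn isOpen_compl_singleton hx (hpd k)]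
  simp only [pd_const_mul, pd_mul (differentiableAt_coord _) (hq.fun_mul hq), pd_mul hq hq,
    pd_invNormSq hx, pd_coord, if_true]
  rw [Finset.sum_congr rfl fun k _ => show _ = 8 * invNormSq x ^ 2 * (x k ^ 2 * invNormSq x)
    - 2 * invNormSq x ^ 2 by ring, Finset.sum_sub_distrib, ← Finset.mul_sum, ← Finset.sum_mul,
    sum_sq_mul_invNormSq hx, Finset.sum_const, Finset.card_univ, Fintype.card_fin, nsmul_eq_mul]
  ring

lemma lap_coord_mul_invNormSq (j : Fin m) (hx : x ≠ 0) :
    lap (fun y => y j * invNormSq y) x = (4 - 2 * m) * x j * invNormSq x ^ 2 := by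
  rw [lap_coord_mul isOpen_compl_singleton hx j contDiffOn_invNormSq, lap_invNormSq hx,
    pd_invNormSq hx]
  ring

lemma lap_coord_mul_coord_mul_invNormSq (i j : Fin m) (hx : x ≠ 0) :
    lap (fun y => y i * (y j * invNormSq y)) x
      = 2 * (if i = j then 1 else 0) * invNormSq x - 2 * m * (x i * (x j * invNormSq x ^ 2)) := by
  rw [lap_coord_mul isOpen_compl_singleton hx i ((contDiffOn_coord j).mul contDiffOn_invNormSq),
    lap_coord_mul_invNormSq j hx,
    pd_mul (differentiableAt_coord j) (differentiableAt_invNormSq hx), pd_coord, pd_invNormSq hx]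
  rcases eq_or_ne i j with rfl | hij
  · simp only [if_true]
    ring
  · simp only [hij, hij.symm, if_false]
    ring

lemma uMN_eq (i j : Fin m) :
    uMN m i j = fun y =>
      1 / √(m * (m - 1)) * (-(if i = j then 1 else 0) + m * (y i * (y j * invNormSq y))) := by
  funext y
  simp only [uMN, invNormSq, div_eq_mul_inv]
  ring

lemma contDiffOn_uMN (i j : Fin m) : ContDiffOn ℝ ∞ (uMN m i j) {0}ᶜ := by
  rw [uMN_eq]
  exact contDiffOn_const.mul (contDiffOn_const.add (contDiffOn_const.mul
    ((contDiffOn_coord i).mul ((contDiffOn_coord j).mul contDiffOn_invNormSq))))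

lemma lap_uMN (i j : Fin m) (hx : x ≠ 0) :
    lap (uMN m i j) x = -(2 * m * invNormSq x * uMN m i j x) := by
  rw [uMN_eq]
  simp only [lap_const_mul, lap_const_add, lap_coord_mul_coord_mul_invNormSq i j hx]
  ring

lemma sum_uMN_sq (hm : 2 ≤ m) (hx : x ≠ 0) :
    ∑ p : Fin m × Fin m, uMN m p.1 p.2 x ^ 2 = 1 := by
  have hm' : (2 : ℝ) ≤ m := by exact_mod_cast hm
  have hS : ∑ i, x i ^ 2 * invNormSq x = 1 := by rw [← Finset.sum_mul, sum_sq_mul_invNormSq hx]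
  have hc : (1 / √(m * (m - 1) : ℝ)) ^ 2 = 1 / (m * (m - 1)) := by
    rw [div_pow, one_pow, Real.sq_sqrt (by nlinarith)]
  have hterm (i j : Fin m) : uMN m i j x ^ 2 = (1 / √(m * (m - 1) : ℝ)) ^ 2
      * ((if i = j then 1 - 2 * m * (x i ^ 2 * invNormSq x) else 0)
        + m ^ 2 * (x i ^ 2 * invNormSq x) * (x j ^ 2 * invNormSq x)) := by
    rw [uMN_eq]
    split_ifs with hij
    · subst hij
      ring
    · ring
  simp only [Fintype.sum_prod_type, hterm, ← Finset.mul_sum, Finset.sum_add_distrib,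
    Finset.sum_ite_eq, Finset.mem_univ, if_true, hS, Finset.sum_sub_distrib, mul_one,
    Finset.sum_const, Finset.card_univ, Fintype.card_fin, nsmul_eq_mul, hc]
  rw [div_mul_eq_mul_div, one_mul, div_eq_one_iff_eq (by nlinarith)]
  ring

lemma uMN_smul (i j : Fin m) {t : ℝ} (ht : t ≠ 0) : uMN m i j (t • x) = uMN m i j x := by
  simp only [uMN, PiLp.smul_apply, smul_eq_mul, norm_smul, Real.norm_eq_abs, mul_pow, sq_abs]
  rw [show (m : ℝ) * (t * x i) * (t * x j) = t ^ 2 * (m * x i * x j) by ring,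
    mul_div_mul_left _ _ (pow_ne_zero 2 ht)]

lemma isHarmonicSphereMapOn_uMN (hm : 2 ≤ m) :
    IsHarmonicSphereMapOn {0}ᶜ fun p : Fin m × Fin m => uMN m p.1 p.2 :=
  .of_lap_eq isOpen_compl_singleton (fun p => contDiffOn_uMN p.1 p.2)
    (fun _ hy => sum_uMN_sq hm hy) fun _ hy p => lap_uMN p.1 p.2 hy

lemma gradSq_uMN (hm : 2 ≤ m) (hx : x ≠ 0) :
    gradSq (fun p : Fin m × Fin m => uMN m p.1 p.2) x = 2 * m * invNormSq x :=
  gradSq_eq_of_lap_eq (u := fun p : Fin m × Fin m => uMN m p.1 p.2)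
    (e := fun y => 2 * m * invNormSq y) isOpen_compl_singleton hx
    (fun p => contDiffOn_uMN p.1 p.2) (fun _ hy => sum_uMN_sq hm hy) fun p => lap_uMN p.1 p.2 hx

lemma lap_gradSq_uMN (hm : 2 ≤ m) (hx : x ≠ 0) :
    lap (gradSq fun p : Fin m × Fin m => uMN m p.1 p.2) x
      = 2 * m * (8 - 2 * m) * invNormSq x ^ 2 := by
  rw [lap_congr_of_eqOn isOpen_compl_singleton hx fun y hy => gradSq_uMN hm hy, lap_const_mul,
    lap_invNormSq hx]
  ring

lemma sum_pd_gradSq_mul_pd_uMN (hm : 2 ≤ m) (hx : x ≠ 0) (p : Fin m × Fin m) :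
    ∑ k, pd k (gradSq fun p : Fin m × Fin m => uMN m p.1 p.2) x * pd k (uMN m p.1 p.2) x
      = 0 := by
  have hpd (k : Fin m) :
      pd k (gradSq fun p : Fin m × Fin m => uMN m p.1 p.2) x
        = -4 * m * invNormSq x ^ 2 * x k := by
    rw [pd_congr_of_eqOn isOpen_compl_singleton hx fun y hy => gradSq_uMN hm hy, pd_const_mul,
      pd_invNormSq hx]
    ring
  have heuler : ∑ k, x k * pd k (uMN m p.1 p.2) x = 0 :=
    sum_mul_pd_eq_zero_of_smul_eq
      ((contDiffOn_uMN p.1 p.2).differentiableAt_of_isOpen isOpen_compl_singleton hx)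
      fun _ ht => uMN_smul p.1 p.2 ht.ne'
  calc ∑ k, pd k (gradSq fun p : Fin m × Fin m => uMN m p.1 p.2) x * pd k (uMN m p.1 p.2) x
      = -4 * m * invNormSq x ^ 2 * ∑ k, x k * pd k (uMN m p.1 p.2) x := by
        rw [Finset.mul_sum]
        exact Finset.sum_congr rfl fun k _ => by rw [hpd k]; ring
    _ = 0 := by rw [heuler, mul_zero]

end MisawaNakauchi

lemma uTilde_eq_rotatedMap (m : ℕ) (α : ℝ) :
    uTilde m α = rotatedMap α fun p : Fin m × Fin m => uMN m p.1 p.2 := by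
  funext a
  cases a <;> rfl

theorem stmt4 (m : ℕ) (hm : 2 ≤ m) (α : ℝ) (hα : α ∈ Set.Ioo 0 (π / 2)) :
    (∀ x : EuclideanSpace ℝ (Fin m), x ≠ 0 → IsBiharmonicAt (uTilde m α) x)
      ↔ Real.sin α ^ 2 = 1 - 2 / (m : ℝ) := by
  have hsin : sin α ≠ 0 := (sin_pos_of_pos_of_lt_pi hα.1 (by linarith [hα.2, pi_pos])).ne'
  have hcos : cos α ≠ 0 := (cos_pos_of_mem_Ioo ⟨by linarith [hα.1, pi_pos], hα.2⟩).ne'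
  have hm0 : (m : ℝ) ≠ 0 := by positivity
  have key (x : EuclideanSpace ℝ (Fin m)) (hx : x ≠ 0) :
      IsBiharmonicAt (uTilde m α) x ↔ sin α ^ 2 = 1 - 2 / m := by
    have hq : invNormSq x ≠ 0 := by simpa [invNormSq] using hx
    rw [uTilde_eq_rotatedMap, (isHarmonicSphereMapOn_uMN hm).isBiharmonicAt_rotatedMap_iff
      isOpen_compl_singleton hx hsin hcos (sum_pd_gradSq_mul_pd_uMN hm hx),
      lap_gradSq_uMN hm hx, gradSq_uMN hm hx]
    rw [← sub_eq_zero, show 2 * m * (8 - 2 * m) * invNormSq x ^ 2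
        - (1 - 2 * sin α ^ 2) * (2 * m * invNormSq x) ^ 2
        = 8 * m ^ 2 * invNormSq x ^ 2 * (sin α ^ 2 - (1 - 2 / m)) by field_simp; ring,
      mul_eq_zero, sub_eq_zero, or_iff_right (by positivity)]
  have : NeZero m := ⟨by omega⟩
  obtain ⟨x₀, hx₀⟩ := exists_ne (0 : EuclideanSpace ℝ (Fin m))
  exact ⟨fun h => (key x₀ hx₀).1 (h x₀ hx₀), fun h x hx => (key x hx).2 h⟩
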